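/- For a fibrewise pointed space X over B, cat_B^*(X) ≤ TC_B(X) ≤ cat_B^*(X ×_B X). -/

import Mathlib

open scoped unitInterval

variable {B X Y Z X' Y' : Type*} [TopologicalSpace B] [TopologicalSpace X]
  [TopologicalSpace Y] [TopologicalSpace Z] [TopologicalSpace X'] [TopologicalSpace Y']

/-- `f` and `g` are fibrewise homotopic over `B` on the subset `U ⊆ X`:
there is a homotopy `H` from `f|U` to `g|U` each of whose stages is fibrewise. -/
def FibHomotopicOn (pX : X → B) (pY : Y → B) (f g : X → Y) (U : Set X) : Prop :=
  ∃ H : C(U × unitInterval, Y),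
    (∀ u : U, H (u, 0) = f u) ∧ (∀ u : U, H (u, 1) = g u) ∧
    (∀ (u : U) (t : unitInterval), pY (H (u, t)) = pX u)

/-- The parametrized (fibrewise) homotopic distance `D_B(f,g)`: the least `n`
such that `X` has an open cover by `n+1` sets on each of which `f` and `g` are
fibrewise homotopic (`∞` if there is no such cover). -/
noncomputable def fibDist (pX : X → B) (pY : Y → B) (f g : X → Y) : ℕ∞ :=
  sInf ((fun n : ℕ => (n : ℕ∞)) ''
    {n : ℕ | ∃ U : Fin (n + 1) → Set X,
      (∀ i, IsOpen (U i)) ∧ (⋃ i, U i) = Set.univ ∧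
      ∀ i, FibHomotopicOn pX pY f g (U i)})

/-!
Homotopic distance can only drop under precomposition with a continuous fibrewise map, since
covers pull back. Precomposing `(pr₁, pr₂)` with `i₂ = (s ∘ p, id)` gives `(s ∘ p, id)`, whence
`cat_B^* X ≤ TC_B X`. Conversely, on a set where `id` is fibrewise homotopic to the constant
section of `X ×_B X`, postcomposing with the two projections gives `pr₁ ≃ s ∘ p ∘ pr₁ ≃ pr₂`.
-/

section

omit [TopologicalSpace B]

namespace FibHomotopicOn

variable {pX : X → B} {pY : Y → B} {f g h : X → Y} {U : Set X}

theorem iff_homotopyWith : FibHomotopicOn pX pY f g U ↔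
    ∃ F G : C(U, Y), ⇑F = f ∘ (↑) ∧ ⇑G = g ∘ (↑) ∧
      Nonempty (F.HomotopyWith G fun F => ∀ u, pY (F u) = pX u) := by
  constructor
  · rintro ⟨H, h0, h1, hfib⟩
    exact ⟨H.comp (.prodMk (.id U) (.const U 0)), H.comp (.prodMk (.id U) (.const U 1)),
      funext h0, funext h1,
      ⟨{ toContinuousMap := H.comp .prodSwap
         map_zero_left := fun _ => rfl
         map_one_left := fun _ => rfl
         prop' := fun t u => hfib u t }⟩⟩
  · rintro ⟨F, G, hF, hG, ⟨K⟩⟩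
    exact ⟨K.toContinuousMap.comp .prodSwap, fun u => (K.apply_zero u).trans (congrFun hF u),
      fun u => (K.apply_one u).trans (congrFun hG u), fun u t => K.prop t u⟩

theorem symm (hfg : FibHomotopicOn pX pY f g U) : FibHomotopicOn pX pY g f U := by
  obtain ⟨F, G, hF, hG, ⟨K⟩⟩ := iff_homotopyWith.1 hfg
  exact iff_homotopyWith.2 ⟨G, F, hG, hF, ⟨K.symm⟩⟩

theorem trans (hfg : FibHomotopicOn pX pY f g U) (hgh : FibHomotopicOn pX pY g h U) :
    FibHomotopicOn pX pY f h U := by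
  obtain ⟨F, G, hF, hG, ⟨K⟩⟩ := iff_homotopyWith.1 hfg
  obtain ⟨G', H, hG', hH, ⟨K'⟩⟩ := iff_homotopyWith.1 hgh
  obtain rfl : G' = G := DFunLike.coe_injective (hG'.trans hG.symm)
  exact iff_homotopyWith.2 ⟨F, H, hF, hH, ⟨K.trans K'⟩⟩

theorem postcomp {pY' : Y' → B} {k : Y → Y'} (hk : Continuous k) (hkfib : ∀ y, pY' (k y) = pY y)
    (hfg : FibHomotopicOn pX pY f g U) : FibHomotopicOn pX pY' (k ∘ f) (k ∘ g) U := by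
  obtain ⟨H, h0, h1, hfib⟩ := hfg
  exact ⟨⟨k ∘ H, hk.comp H.continuous⟩, fun u => congrArg k (h0 u), fun u => congrArg k (h1 u),
    fun u t => (hkfib _).trans (hfib u t)⟩

theorem precomp {pX' : X' → B} {φ : X' → X} (hφ : Continuous φ) (hφfib : ∀ x, pX (φ x) = pX' x)
    (hfg : FibHomotopicOn pX pY f g U) : FibHomotopicOn pX' pY (f ∘ φ) (g ∘ φ) (φ ⁻¹' U) := by
  obtain ⟨H, h0, h1, hfib⟩ := hfg
  let φU : C(φ ⁻¹' U, U) := ⟨fun x => ⟨φ x, x.2⟩, by fun_prop⟩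
  exact ⟨H.comp (φU.prodMap (.id I)), fun _ => h0 _, fun _ => h1 _,
    fun _ _ => (hfib _ _).trans (hφfib _)⟩

end FibHomotopicOn

theorem fibDist_le_of_fibHomotopicOn_imp {pX : X → B} {pY : Y → B} {pY' : Y' → B}
    {f g : X → Y} {f' g' : X → Y'}
    (h : ∀ U, FibHomotopicOn pX pY f g U → FibHomotopicOn pX pY' f' g' U) :
    fibDist pX pY' f' g' ≤ fibDist pX pY f g :=
  sInf_le_sInf <| Set.image_mono fun _ ⟨U, hUo, hUc, hU⟩ => ⟨U, hUo, hUc, fun i => h _ (hU i)⟩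

theorem fibDist_comm {pX : X → B} {pY : Y → B} {f g : X → Y} :
    fibDist pX pY f g = fibDist pX pY g f :=
  le_antisymm (fibDist_le_of_fibHomotopicOn_imp fun _ => .symm)
    (fibDist_le_of_fibHomotopicOn_imp fun _ => .symm)

theorem fibDist_comp_le {pX : X → B} {pY : Y → B} {pX' : X' → B} {f g : X → Y} {φ : X' → X}
    (hφ : Continuous φ) (hφfib : ∀ x, pX (φ x) = pX' x) :
    fibDist pX' pY (f ∘ φ) (g ∘ φ) ≤ fibDist pX pY f g :=
  sInf_le_sInf <| Set.image_mono fun _ ⟨U, hUo, hUc, hU⟩ =>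
    ⟨fun i => φ ⁻¹' U i, fun i => (hUo i).preimage hφ,
      by rw [← Set.preimage_iUnion, hUc, Set.preimage_univ], fun i => (hU i).precomp hφ hφfib⟩

end

theorem fibCat_le_fibTC_le_fibCat_prod (pX : X → B) (sX : B → X)
    (hpX : Continuous pX) (hsX : Continuous sX) (hsec : ∀ b, pX (sX b) = b) :
    fibDist pX pX id (fun x => sX (pX x)) ≤
        fibDist (fun z : {z : X × X // pX z.1 = pX z.2} => pX z.val.1) pX
          (fun z => z.val.1) (fun z => z.val.2) ∧
      fibDist (fun z : {z : X × X // pX z.1 = pX z.2} => pX z.val.1) pX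
          (fun z => z.val.1) (fun z => z.val.2) ≤
        fibDist (fun z : {z : X × X // pX z.1 = pX z.2} => pX z.val.1)
          (fun z : {z : X × X // pX z.1 = pX z.2} => pX z.val.1) id
          (fun z => (⟨(sX (pX z.val.1), sX (pX z.val.1)), rfl⟩ :
            {z : X × X // pX z.1 = pX z.2})) := by
  refine ⟨?_, fibDist_le_of_fibHomotopicOn_imp fun U hU => ?_⟩
  · let i₂ : X → {z : X × X // pX z.1 = pX z.2} := fun x => ⟨(sX (pX x), x), hsec (pX x)⟩
    have hi₂ : Continuous i₂ := ((hsX.comp hpX).prodMk continuous_id).subtype_mk _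
    rw [fibDist_comm]
    refine fibDist_comp_le (f := fun z => z.val.1) (g := fun z => z.val.2) hi₂ fun x => ?_
    exact hsec (pX x)
  · exact (hU.postcomp (k := Prod.fst ∘ Subtype.val) (by fun_prop) fun _ => rfl).trans
      (hU.postcomp (k := Prod.snd ∘ Subtype.val) (by fun_prop) fun z => z.prop.symm).symm
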